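/- The renaming/trigger abstraction is sound: for an EMITL_{0,∞} formula φ in negative normal form with set Φ of temporal subformulae and fresh propositions p_ψ for ψ ∈ Φ, the formula φ′ = φ̄ ∧ ⋀_{ψ=A_I(φ₁,…,φₙ)∈Φ} G(p_ψ ⇒ A_I(φ̄₁,…,φ̄ₙ)) ∧ ⋀_{ψ=Ã_I(φ₁,…,φₙ)∈Φ} G(p_ψ ⇒ Ã_I(φ̄₁,…,φ̄ₙ)) over AP ∪ {p_ψ} satisfies proj_AP(⟦φ′⟧) = ⟦φ⟧, where φ̄ replaces each top-level temporal subformula ψ by p_ψ. -/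
import Mathlib


/-- An interval with endpoints in ℕ ∪ {∞}. -/
structure Ivl where
  lo : ℕ
  loStrict : Bool
  hi : Option ℕ
  hiStrict : Bool

def Ivl.mem (I : Ivl) (t : ℝ) : Prop :=
  (if I.loStrict then (I.lo : ℝ) < t else (I.lo : ℝ) ≤ t) ∧
  (match I.hi with
   | none => True
   | some h => if I.hiStrict then t < (h : ℝ) else t ≤ (h : ℝ))

/-- The interval is a lower bound or an upper bound (as in EMITL_{0,∞}). -/
def Ivl.IsZeroInf (I : Ivl) : Prop :=
  (I.lo = 0 ∧ I.loStrict = false) ∨ I.hi = none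

/-- An NFA over the alphabet {1,…,n}, with locations in ℕ. -/
structure NFAL (n : ℕ) where
  init : ℕ
  trans : ℕ → Fin n → List ℕ
  final : ℕ → Bool

def NFAL.RunOn {n : ℕ} (A : NFAL n) : ℕ → List (Fin n) → ℕ → Prop
  | q, [], q' => q = q'
  | q, a :: w, q' => ∃ q'' ∈ A.trans q a, A.RunOn q'' w q'

def NFAL.Accepts {n : ℕ} (A : NFAL n) (w : List (Fin n)) : Prop :=
  w ≠ [] ∧ ∃ qf, A.final qf = true ∧ A.RunOn A.init w qf

def wordOf {α : Type*} (a : ℕ → α) (i j : ℕ) : List α :=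
  (List.range (j + 1 - i)).map fun k => a (i + k)

/-- A timed word: non-decreasing, non-negative, unbounded (non-Zeno) timestamps. -/
structure TimedWord (α : Type*) where
  sym : ℕ → α
  tm  : ℕ → ℝ
  nonneg : ∀ i, 0 ≤ tm i
  mono : Monotone tm
  nonZeno : ∀ r : ℝ, ∃ j, r ≤ tm j

/-- EMITL formulae in negative normal form. -/
inductive NNF (AP : Type) : Type where
  | top : NNF AP
  | bot : NNF AP
  | atom (p : AP) : NNF AP
  | natom (p : AP) : NNF AP
  | and (φ ψ : NNF AP) : NNF AP
  | or (φ ψ : NNF AP) : NNF AP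
  | auto (n : ℕ) (A : NFAL n) (I : Ivl) (args : Fin n → NNF AP) : NNF AP
  | dauto (n : ℕ) (A : NFAL n) (I : Ivl) (args : Fin n → NNF AP) : NNF AP

def AutoWitL {n : ℕ} (A : NFAL n) (tm : ℕ → ℝ) (H : ℕ → Fin n → Prop)
    (I : Ivl) (i : ℕ) : Prop :=
  ∃ j, i ≤ j ∧ I.mem (tm j - tm i) ∧
    ∃ a : ℕ → Fin n, A.Accepts (wordOf a i j) ∧ ∀ ℓ, i ≤ ℓ → ℓ ≤ j → H ℓ (a ℓ)

/-- Pointwise semantics over timed words (over the powerset alphabet). -/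
def NNF.sat {AP : Type} (ρ : TimedWord (Set AP)) : ℕ → NNF AP → Prop
  | _, .top => True
  | _, .bot => False
  | i, .atom p => p ∈ ρ.sym i
  | i, .natom p => p ∉ ρ.sym i
  | i, .and φ ψ => NNF.sat ρ i φ ∧ NNF.sat ρ i ψ
  | i, .or φ ψ => NNF.sat ρ i φ ∨ NNF.sat ρ i ψ
  | i, .auto _ A I args =>
      AutoWitL A ρ.tm (fun ℓ a => NNF.sat ρ ℓ (args a)) I i
  | i, .dauto _ A I args =>
      ¬ AutoWitL A ρ.tm (fun ℓ a => ¬ NNF.sat ρ ℓ (args a)) I i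

/-- The EMITL_{0,∞} fragment: all constraining intervals are lower or upper bounds. -/
def ZeroInf {AP : Type} : NNF AP → Prop
  | .top => True
  | .bot => True
  | .atom _ => True
  | .natom _ => True
  | .and φ ψ => ZeroInf φ ∧ ZeroInf ψ
  | .or φ ψ => ZeroInf φ ∧ ZeroInf ψ
  | .auto _ _ I args => I.IsZeroInf ∧ ∀ a, ZeroInf (args a)
  | .dauto _ _ I args => I.IsZeroInf ∧ ∀ a, ZeroInf (args a)

/-- `TempSub ψ φ`: ψ is a temporal subformula of φ (a subformula whose outermost
operator is A_I or Ã_I). -/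
inductive TempSub {AP : Type} : NNF AP → NNF AP → Prop where
  | and_left {ψ φ₁ φ₂} : TempSub ψ φ₁ → TempSub ψ (.and φ₁ φ₂)
  | and_right {ψ φ₁ φ₂} : TempSub ψ φ₂ → TempSub ψ (.and φ₁ φ₂)
  | or_left {ψ φ₁ φ₂} : TempSub ψ φ₁ → TempSub ψ (.or φ₁ φ₂)
  | or_right {ψ φ₁ φ₂} : TempSub ψ φ₂ → TempSub ψ (.or φ₁ φ₂)
  | auto_self {n A I args} : TempSub (.auto n A I args) (.auto n A I args)
  | auto_arg {ψ n A I args} {a : Fin n} :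
      TempSub ψ (args a) → TempSub ψ (.auto n A I args)
  | dauto_self {n A I args} : TempSub (.dauto n A I args) (.dauto n A I args)
  | dauto_arg {ψ n A I args} {a : Fin n} :
      TempSub ψ (args a) → TempSub ψ (.dauto n A I args)

/-- φ̄: replace every top-level temporal subformula ψ by its trigger p_ψ (a fresh
atomic proposition indexed by ψ itself). -/
def bar {AP : Type} : NNF AP → NNF (AP ⊕ NNF AP)
  | .top => .top
  | .bot => .bot
  | .atom p => .atom (.inl p)
  | .natom p => .natom (.inl p)
  | .and φ ψ => .and (bar φ) (bar ψ)
  | .or φ ψ => .or (bar φ) (bar ψ)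
  | .auto n A I args => .atom (.inr (.auto n A I args))
  | .dauto n A I args => .atom (.inr (.dauto n A I args))

/-- For a temporal formula ψ = A_I(φ₁,…,φₙ) (resp. Ã_I(φ₁,…,φₙ)), the formula
A_I(φ̄₁,…,φ̄ₙ) (resp. Ã_I(φ̄₁,…,φ̄ₙ)). -/
def barBody {AP : Type} : NNF AP → NNF (AP ⊕ NNF AP)
  | .auto n A I args => .auto n A I fun a => bar (args a)
  | .dauto n A I args => .dauto n A I fun a => bar (args a)
  | φ => bar φ

/-- The timed word obtained by hiding all trigger propositions. -/
def proj {AP : Type} (ρ : TimedWord (Set (AP ⊕ NNF AP))) : TimedWord (Set AP) where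
  sym := fun i => {p | Sum.inl p ∈ ρ.sym i}
  tm := ρ.tm
  nonneg := ρ.nonneg
  mono := ρ.mono
  nonZeno := ρ.nonZeno

/-- A timed word over the extended alphabet satisfies
φ′ = φ̄ ∧ ⋀_{ψ ∈ Φ} G(p_ψ ⇒ A_I(φ̄₁,…,φ̄ₙ)) (resp. the Ã_I conjuncts). -/
def SatPrime {AP : Type} (φ : NNF AP) (ρ' : TimedWord (Set (AP ⊕ NNF AP))) : Prop :=
  NNF.sat ρ' 0 (bar φ) ∧
  ∀ ψ : NNF AP, TempSub ψ φ → ∀ j : ℕ, Sum.inr ψ ∈ ρ'.sym j → NNF.sat ρ' j (barBody ψ)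


lemma AutoWitL.mono {n : ℕ} {A : NFAL n} {tm : ℕ → ℝ} {H H' : ℕ → Fin n → Prop}
    {I : Ivl} {i : ℕ} (h : ∀ ℓ a, H ℓ a → H' ℓ a) :
    AutoWitL A tm H I i → AutoWitL A tm H' I i := by
  rintro ⟨j, hij, hI, a, hacc, hH⟩
  exact ⟨j, hij, hI, a, hacc, fun ℓ h1 h2 => h ℓ (a ℓ) (hH ℓ h1 h2)⟩

lemma sat_bar_to_sat {AP : Type} (ρ' : TimedWord (Set (AP ⊕ NNF AP))) (χ : NNF AP)
    (hG : ∀ ψ, TempSub ψ χ → ∀ j, Sum.inr ψ ∈ ρ'.sym j → NNF.sat ρ' j (barBody ψ)) :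
    ∀ i, NNF.sat ρ' i (bar χ) → NNF.sat (proj ρ') i χ := by
  induction χ with
  | top => intro i _; trivial
  | bot => intro i h; exact h
  | atom p => intro i h; exact h
  | natom p => intro i h; exact h
  | and φ ψ ih1 ih2 =>
      rintro i ⟨h1, h2⟩
      exact ⟨ih1 (fun ψ' hs => hG ψ' (.and_left hs)) i h1,
             ih2 (fun ψ' hs => hG ψ' (.and_right hs)) i h2⟩
  | or φ ψ ih1 ih2 =>
      rintro i (h1 | h2)
      · exact Or.inl (ih1 (fun ψ' hs => hG ψ' (.or_left hs)) i h1)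
      · exact Or.inr (ih2 (fun ψ' hs => hG ψ' (.or_right hs)) i h2)
  | auto n A I args ih =>
      intro i h
      have hb := hG _ TempSub.auto_self i h
      exact AutoWitL.mono
        (fun ℓ a hh => ih a (fun ψ' hs => hG ψ' (.auto_arg hs)) ℓ hh) hb
  | dauto n A I args ih =>
      intro i h hw
      have hb := hG _ TempSub.dauto_self i h
      exact hb (AutoWitL.mono
        (fun ℓ a hn hs => hn (ih a (fun ψ' hs => hG ψ' (.dauto_arg hs)) ℓ hs)) hw)

/-- The canonical annotation: triggers are placed exactly where the corresponding
temporal formula holds. -/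
def annot {AP : Type} (ρ : TimedWord (Set AP)) : TimedWord (Set (AP ⊕ NNF AP)) where
  sym := fun i x => match x with
    | .inl p => p ∈ ρ.sym i
    | .inr ψ => NNF.sat ρ i ψ
  tm := ρ.tm
  nonneg := ρ.nonneg
  mono := ρ.mono
  nonZeno := ρ.nonZeno

lemma annot_sat_bar {AP : Type} (ρ : TimedWord (Set AP)) (χ : NNF AP) (i : ℕ) :
    NNF.sat (annot ρ) i (bar χ) ↔ NNF.sat ρ i χ := by
  induction χ generalizing i with
  | top => simp [bar, NNF.sat]
  | bot => simp [bar, NNF.sat]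
  | atom p => exact Iff.rfl
  | natom p => exact Iff.rfl
  | and φ ψ ih1 ih2 => exact and_congr (ih1 i) (ih2 i)
  | or φ ψ ih1 ih2 => exact or_congr (ih1 i) (ih2 i)
  | auto n A I args ih => exact Iff.rfl
  | dauto n A I args ih => exact Iff.rfl

lemma annot_sat_barBody {AP : Type} (ρ : TimedWord (Set AP)) (ψ : NNF AP) (j : ℕ)
    (h : NNF.sat ρ j ψ) : NNF.sat (annot ρ) j (barBody ψ) := by
  cases ψ with
  | auto n A I args =>
      exact AutoWitL.mono (fun ℓ a hh => (annot_sat_bar ρ (args a) ℓ).2 hh) h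
  | dauto n A I args =>
      intro hw
      exact h (AutoWitL.mono
        (fun ℓ a hn hs => hn ((annot_sat_bar ρ (args a) ℓ).2 hs)) hw)
  | top => exact (annot_sat_bar ρ .top j).2 h
  | bot => exact (annot_sat_bar ρ .bot j).2 h
  | atom p => exact (annot_sat_bar ρ (.atom p) j).2 h
  | natom p => exact (annot_sat_bar ρ (.natom p) j).2 h
  | and φ χ => exact (annot_sat_bar ρ (.and φ χ) j).2 h
  | or φ χ => exact (annot_sat_bar ρ (.or φ χ) j).2 h

/-- Soundness of the renaming/trigger abstraction: for an EMITL_{0,∞} formula φ in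
negative normal form, proj_AP(⟦φ′⟧) = ⟦φ⟧. -/
theorem trigger_abstraction {AP : Type} (φ : NNF AP) (hφ : ZeroInf φ) :
    {ρ : TimedWord (Set AP) | ∃ ρ', SatPrime φ ρ' ∧ proj ρ' = ρ} =
      {ρ : TimedWord (Set AP) | NNF.sat ρ 0 φ} := by
  ext ρ
  constructor
  · rintro ⟨ρ', ⟨h1, h2⟩, rfl⟩
    exact sat_bar_to_sat ρ' φ h2 0 h1
  · intro h
    refine ⟨annot ρ, ⟨(annot_sat_bar ρ φ 0).2 h, ?_⟩, ?_⟩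
    · intro ψ _ j hj
      exact annot_sat_barBody ρ ψ j hj
    · rfl
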